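/- Let G be a simple connected graph and (u,v) an edge with no common neighbors, i.e., N(u) ∩ N(v) = ∅. Then the Ollivier–Ricci curvature κ(u,v) = 1 − W₁(μ_u, μ_v)/d(u,v) satisfies κ(u,v) ≤ 0. -/

import Mathlib

/-!
A coupling of `μ_u` and `μ_v` only moves mass from `N(u)` to `N(v)`. These sets are disjoint and
joined through the edge `uv`, so each unit of mass travels a positive, hence at least unit,
distance. Every coupling therefore costs at least `1`, and the infimum is over a nonempty set
thanks to the product coupling.
-/

open SimpleGraph Finset

variable {V : Type*}

/-- 1-step uniform random walk measure at `u`. -/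
noncomputable def rwMeasure (G : SimpleGraph V) [Fintype V] [DecidableRel G.Adj] (u : V) : V → ℝ :=
  fun w => if G.Adj u w then (G.degree u : ℝ)⁻¹ else 0

/-- `π` is a coupling of the random walk measures `μ_u` and `μ_v`. -/
def IsCoupling (G : SimpleGraph V) [Fintype V] [DecidableRel G.Adj]
    (u v : V) (π : V → V → ℝ) : Prop :=
  (∀ p q, 0 ≤ π p q) ∧
  (∀ p, ∑ q, π p q = rwMeasure G u p) ∧
  (∀ q, ∑ p, π p q = rwMeasure G v q)

/-- Transport cost of `π` with respect to the shortest-path distance. -/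
noncomputable def transportCost (G : SimpleGraph V) [Fintype V] (π : V → V → ℝ) : ℝ :=
  ∑ p, ∑ q, π p q * (G.dist p q : ℝ)

/-- L¹-Wasserstein distance between the 1-step random walk measures at `u` and `v`. -/
noncomputable def W1 (G : SimpleGraph V) [Fintype V] [DecidableRel G.Adj] (u v : V) : ℝ :=
  sInf {c : ℝ | ∃ π : V → V → ℝ, IsCoupling G u v π ∧ transportCost G π = c}

lemma one_le_dist_of_adj_of_adj {G : SimpleGraph V} {u v p q : V} (huv : G.Adj u v)
    (hup : G.Adj u p) (hvq : G.Adj v q) (hpq : p ≠ q) : 1 ≤ G.dist p q :=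
  ((hup.symm.reachable.trans huv.reachable).trans hvq.reachable).pos_dist_of_ne hpq

section

variable {G : SimpleGraph V} [Fintype V] [DecidableRel G.Adj]

lemma rwMeasure_nonneg (u w : V) : 0 ≤ rwMeasure G u w := by
  unfold rwMeasure
  split <;> positivity

lemma rwMeasure_eq_zero {u w : V} (h : ¬ G.Adj u w) : rwMeasure G u w = 0 :=
  if_neg h

lemma sum_rwMeasure {u : V} (hu : G.degree u ≠ 0) : ∑ w, rwMeasure G u w = 1 := by
  unfold rwMeasure
  rw [← sum_filter, ← neighborFinset_eq_filter, sum_const, card_neighborFinset_eq_degree,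
    nsmul_eq_mul, mul_inv_cancel₀ (Nat.cast_ne_zero.mpr hu)]

lemma isCoupling_mul {u v : V} (hu : G.degree u ≠ 0) (hv : G.degree v ≠ 0) :
    IsCoupling G u v fun p q ↦ rwMeasure G u p * rwMeasure G v q :=
  ⟨fun p q ↦ mul_nonneg (rwMeasure_nonneg u p) (rwMeasure_nonneg v q),
    fun p ↦ by rw [← mul_sum, sum_rwMeasure hv, mul_one],
    fun q ↦ by rw [← sum_mul, sum_rwMeasure hu, one_mul]⟩

namespace IsCoupling

variable {u v : V} {π : V → V → ℝ}

lemma adj_left (hπ : IsCoupling G u v π) {p q : V} (hpq : π p q ≠ 0) : G.Adj u p := by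
  by_contra hup
  have hrow := hπ.2.1 p
  rw [rwMeasure_eq_zero hup, sum_eq_zero_iff_of_nonneg fun q _ ↦ hπ.1 p q] at hrow
  exact hpq (hrow q (mem_univ q))

lemma adj_right (hπ : IsCoupling G u v π) {p q : V} (hpq : π p q ≠ 0) : G.Adj v q := by
  by_contra hvq
  have hcol := hπ.2.2 q
  rw [rwMeasure_eq_zero hvq, sum_eq_zero_iff_of_nonneg fun p _ ↦ hπ.1 p q] at hcol
  exact hpq (hcol p (mem_univ p))

lemma sum_sum_eq_one (hπ : IsCoupling G u v π) (hu : G.degree u ≠ 0) :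
    ∑ p, ∑ q, π p q = 1 := by
  simp only [hπ.2.1, sum_rwMeasure hu]

lemma one_le_transportCost (hπ : IsCoupling G u v π) (huv : G.Adj u v)
    (hdisj : G.neighborSet u ∩ G.neighborSet v = ∅) : 1 ≤ transportCost G π := by
  have hterm : ∀ p q, π p q ≤ π p q * G.dist p q := by
    intro p q
    by_cases h0 : π p q = 0
    · simp [h0]
    have hp := hπ.adj_left h0
    have hq := hπ.adj_right h0
    have hpq : p ≠ q := by
      rintro rfl
      exact Set.notMem_empty p (hdisj ▸ ⟨hp, hq⟩)
    have hdist : (1 : ℝ) ≤ G.dist p q := by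
      exact_mod_cast one_le_dist_of_adj_of_adj huv hp hq hpq
    exact le_mul_of_one_le_right (hπ.1 p q) hdist
  calc 1 = ∑ p, ∑ q, π p q := 
      (hπ.sum_sum_eq_one huv.degree_pos_left.ne').symm
    _ ≤ transportCost G π := sum_le_sum fun p _ ↦ sum_le_sum fun q _ ↦ hterm p q

end IsCoupling

lemma one_le_W1 {u v : V} (huv : G.Adj u v)
    (hdisj : G.neighborSet u ∩ G.neighborSet v = ∅) : 1 ≤ W1 G u v := by
  refine le_csInf
    ⟨_, _, isCoupling_mul huv.degree_pos_left.ne' huv.degree_pos_right.ne', rfl⟩ ?_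
  rintro c ⟨π, hπ, rfl⟩
  exact hπ.one_le_transportCost huv hdisj

end

theorem ricci_curvature_nonpos_general (G : SimpleGraph V) [Fintype V] [DecidableRel G.Adj]
    (u v : V) (huv : G.Adj u v)
    (hdisj : G.neighborSet u ∩ G.neighborSet v = ∅) :
    1 - W1 G u v ≤ 0 :=
  sub_nonpos.mpr (one_le_W1 huv hdisj)

theorem ricci_curvature_nonpos (G : SimpleGraph V) [Fintype V] [DecidableRel G.Adj]
    (hconn : G.Connected) (u v : V) (huv : G.Adj u v)
    (hdisj : G.neighborSet u ∩ G.neighborSet v = ∅) :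
    1 - W1 G u v ≤ 0 :=
  ricci_curvature_nonpos_general G u v huv hdisj
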